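/- Let K be a real number with 0 < K < 1 and let s be the unique real root of p_K(x) = -2x³ + x² + K. Let A be the 4×4 real matrix with rows (a,b,c,b), (b,a,b,c), (c,b,a,b), (b,c,b,a) where a+2b+c=1 (a Kimura 2-parameter matrix), and set α = 1 - 2(b+c) and β = 1 - 4b. Then A has all entries strictly positive and det(A) = K if and only if √K < |α| < s and β = K/α². -/

import Mathlib

/-!
The matrix `A` has eigenvalues `1`, `β` and `α` (twice), so `det A = α² β`, and its entries are
positive iff `β < 1` and `2|α| < 1 + β`. Under `α² β = K` these conditions read `K < α²` and
`2|α|³ < α² + K`, i.e. `√K < |α|` and `p_K(|α|) > 0`; since `p_K(0) = K > 0 > p_K(1)` and `s` is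
the only zero of the continuous function `p_K`, the latter is equivalent to `|α| < s`.
-/

open Real

def kimuraMatrix {R : Type*} (a b c : R) : Matrix (Fin 4) (Fin 4) R :=
  !![a, b, c, b; b, a, b, c; c, b, a, b; b, c, b, a]

theorem det_kimuraMatrix {R : Type*} [CommRing R] (a b c : R) :
    (kimuraMatrix a b c).det = (a - c) ^ 2 * (a + 2 * b + c) * (a + c - 2 * b) := by
  simp [kimuraMatrix, Matrix.det_succ_row_zero, Fin.sum_univ_succ, Fin.succAbove]
  ring

theorem kimuraMatrix_pos_iff {R : Type*} [Zero R] [LT R] (a b c : R) :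
    (∀ i j, 0 < kimuraMatrix a b c i j) ↔ 0 < a ∧ 0 < b ∧ 0 < c := by
  refine ⟨fun h => ⟨h 0 0, h 0 1, h 0 2⟩, ?_⟩
  rintro ⟨ha, hb, hc⟩ i j
  fin_cases i <;> fin_cases j <;> assumption

theorem pos_iff_lt_of_unique_zero {f : ℝ → ℝ} (hf : Continuous f) {s : ℝ}
    (hzero : ∀ t, f t = 0 → t = s) {u v : ℝ} (huv : u < v) (hu : 0 < f u) (hv : f v < 0)
    (t : ℝ) : 0 < f t ↔ t < s := by
  have zero_between : ∀ x y, f x ≤ 0 → 0 ≤ f y → s ∈ Set.uIcc x y ∧ f s = 0 := by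
    intro x y hx hy
    obtain ⟨r, hr, hfr⟩ := intermediate_value_uIcc hf.continuousOn
      (Set.mem_uIcc.mpr (Or.inl ⟨hx, hy⟩))
    obtain rfl := hzero r hfr
    exact ⟨hr, hfr⟩
  obtain ⟨hs_uv, hfs⟩ := zero_between v u hv.le hu.le
  rw [Set.uIcc_of_ge huv.le] at hs_uv
  have hus : u < s := hs_uv.1.lt_of_ne (by rintro rfl; linarith)
  have hsv : s < v := hs_uv.2.lt_of_ne (by rintro rfl; linarith)
  constructor
  · intro ht
    by_contra! hst
    have hst : s < t := hst.lt_of_ne (by rintro rfl; linarith)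
    rcases Set.mem_uIcc.mp (zero_between v t hv.le ht.le).1 with h | h <;> linarith
  · intro hts
    by_contra! ht
    rcases Set.mem_uIcc.mp (zero_between t u ht hu.le).1 with h | h <;> linarith

theorem pos_iff_of_add_eq_one {a b c α β : ℝ} (hsum : a + 2 * b + c = 1)
    (hα : α = 1 - 2 * (b + c)) (hβ : β = 1 - 4 * b) :
    (0 < a ∧ 0 < b ∧ 0 < c) ↔ β < 1 ∧ 2 * |α| < 1 + β := by
  rw [mul_comm, ← lt_div_iff₀ two_pos, abs_lt]
  constructor
  · rintro ⟨ha, hb, hc⟩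
    refine ⟨?_, ?_, ?_⟩ <;> linarith
  · rintro ⟨hb, hc, ha⟩
    refine ⟨?_, ?_, ?_⟩ <;> linarith

theorem pos_and_sq_mul_eq_iff {K t β : ℝ} (hK : 0 < K) (ht : 0 ≤ t) :
    ((β < 1 ∧ 2 * t < 1 + β) ∧ t ^ 2 * β = K) ↔
      (√K < t ∧ 0 < -2 * t ^ 3 + t ^ 2 + K ∧ β = K / t ^ 2) := by
  constructor
  · rintro ⟨⟨hβ1, hcubic⟩, hdet⟩
    have ht0 : 0 < t :=
      ht.lt_of_ne' (by rintro rfl; rw [zero_pow two_ne_zero, zero_mul] at hdet; linarith)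
    refine ⟨(sqrt_lt' ht0).mpr ?_, ?_, ?_⟩
    · nlinarith
    · nlinarith
    · rw [← hdet]; field_simp
  · rintro ⟨hK_lt, hcubic, rfl⟩
    have ht0 : 0 < t := (sqrt_nonneg K).trans_lt hK_lt
    have hKt : K < t ^ 2 := (sqrt_lt' ht0).mp hK_lt
    refine ⟨⟨(div_lt_one (by positivity)).mpr hKt, ?_⟩, by field_simp⟩
    rw [← sub_pos]
    have : 1 + K / t ^ 2 - 2 * t = (-2 * t ^ 3 + t ^ 2 + K) / t ^ 2 := by field_simp; ring
    rw [this]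
    positivity

theorem stmt_6 (K : ℝ) (hK0 : 0 < K) (hK1 : K < 1) (s : ℝ)
    (hsu : ∀ t : ℝ, -2 * t ^ 3 + t ^ 2 + K = 0 → t = s)
    (a b c : ℝ) (hsum : a + 2 * b + c = 1)
    (A : Matrix (Fin 4) (Fin 4) ℝ)
    (hA : A = !![a, b, c, b; b, a, b, c; c, b, a, b; b, c, b, a])
    (α β : ℝ) (hα : α = 1 - 2 * (b + c)) (hβ : β = 1 - 4 * b) :
    ((∀ i j, 0 < A i j) ∧ A.det = K) ↔
      (Real.sqrt K < |α| ∧ |α| < s ∧ β = K / α ^ 2) := by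
  have hA : A = kimuraMatrix a b c := hA
  have hdet : A.det = |α| ^ 2 * β := by
    obtain rfl : a = 1 - 2 * b - c := by linarith
    rw [hA, det_kimuraMatrix, sq_abs, hα, hβ]
    ring
  have hcubic : 0 < -2 * |α| ^ 3 + |α| ^ 2 + K ↔ |α| < s :=
    pos_iff_lt_of_unique_zero (f := fun t => -2 * t ^ 3 + t ^ 2 + K) (by fun_prop) hsu
      zero_lt_one (by norm_num [hK0]) (by norm_num [hK1]) |α|
  rw [hdet, hA, kimuraMatrix_pos_iff, pos_iff_of_add_eq_one hsum hα hβ,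
    pos_and_sq_mul_eq_iff hK0 (abs_nonneg α), hcubic, sq_abs]
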